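/- arXiv:1304.5134 — 3 statements merged into one kernel-verified Lean document; each statement's English description precedes it below -/
import Mathlib

section
/- Let {Π^j_k : j = 0,…,d; k = 0,…,d−1} be the rank-one projectors of a complete set of d+1 mutually unbiased bases of C^d, and let ρ be any density operator with probabilities p^j_k = Tr(ρ Π^j_k). Then ∑_{j,k} (p^j_k)² = Tr(ρ²) + 1. -/
open Matrix BigOperators

/-- inner product of two vectors in `ℂ^d` -/
noncomputable def ip (d : ℕ) (u v : Fin d → ℂ) : ℂ := ∑ a, star (u a) * v a

/-- rank-one projector `|u⟩⟨u|` -/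
noncomputable def proj (d : ℕ) (u : Fin d → ℂ) : Matrix (Fin d) (Fin d) ℂ :=
  Matrix.of fun a b => u a * star (u b)

lemma ip_comm (d : ℕ) (u v : Fin d → ℂ) : ip d v u = star (ip d u v) := by
  simp [ip, star_sum, mul_comm]

lemma trace_proj (d : ℕ) (u : Fin d → ℂ) : Matrix.trace (proj d u) = ip d u u := by
  simp [Matrix.trace, proj, ip, Matrix.diag, mul_comm]

lemma trace_proj_mul (d : ℕ) (u v : Fin d → ℂ) :
    Matrix.trace (proj d u * proj d v) = ip d u v * ip d v u := by
  simp only [Matrix.trace, Matrix.diag, Matrix.mul_apply, proj, Matrix.of_apply, ip,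
    Finset.sum_mul, Finset.mul_sum]
  congr 1; ext a; congr 1; ext c
  ring

lemma geo_sum (d : ℕ) (x : ℂ) (h1 : x ^ d = 1) (hne : x ≠ 1) :
    ∑ k : Fin d, x ^ (k : ℕ) = 0 := by
  rw [Fin.sum_univ_eq_sum_range, geom_sum_eq hne, h1, sub_self, zero_div]

/-- for a complete set of `d+1` MU bases with projectors
`Π^j_k` and a density operator `ρ` with probabilities `p^j_k = Tr(ρ Π^j_k)`,
one has `∑_{j,k} (p^j_k)² = Tr(ρ²) + 1`. -/
theorem mub_purity_relation (d : ℕ) (hd : 2 ≤ d)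
    (φ : Fin (d + 1) → Fin d → (Fin d → ℂ))
    (hmub : ∀ j l k r, (j ≠ l → ‖ip d (φ j k) (φ l r)‖ ^ 2 = 1 / d) ∧
      (j = l → ip d (φ j k) (φ l r) = if k = r then 1 else 0))
    (ρ : Matrix (Fin d) (Fin d) ℂ) (hherm : ρ.IsHermitian)
    (hpsd : ∀ x : Fin d → ℂ, 0 ≤ (dotProduct (star x) (ρ.mulVec x)).re)
    (htr : Matrix.trace ρ = 1)
    (p : Fin (d + 1) → Fin d → ℝ)
    (hp : ∀ j k, (p j k : ℂ) = Matrix.trace (ρ * proj d (φ j k))) :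
    (↑(∑ j, ∑ k, (p j k) ^ 2) : ℂ) = Matrix.trace (ρ * ρ) + 1 := by
  have hd0 : (d : ℂ) ≠ 0 := Nat.cast_ne_zero.mpr (by omega)
  -- trace of each projector
  have h1 : ∀ j k, Matrix.trace (proj d (φ j k)) = 1 := by
    intro j k
    rw [trace_proj, (hmub j j k k).2 rfl, if_pos rfl]
  -- trace of products, unbiased case
  have h2 : ∀ j l k r, j ≠ l →
      Matrix.trace (proj d (φ j k) * proj d (φ l r)) = 1 / (d : ℂ) := by
    intro j l k r hjl
    rw [trace_proj_mul, ip_comm, Complex.star_def, mul_comm, Complex.mul_conj,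
      ← Complex.sq_norm, (hmub l j r k).1 (Ne.symm hjl)]
    push_cast
    ring
  -- trace of products, same basis
  have h3 : ∀ j k r,
      Matrix.trace (proj d (φ j k) * proj d (φ j r)) = if k = r then 1 else 0 := by
    intro j k r
    rw [trace_proj_mul, (hmub j j k r).2 rfl, (hmub j j r k).2 rfl]
    by_cases h : k = r
    · simp [h]
    · simp [h, fun hh : r = k => h hh.symm]
  -- resolution of identity for each basis
  have h4 : ∀ j, ∑ k, proj d (φ j k) = 1 := by
    intro j
    have hV : (Matrix.of fun a k => φ j k a)ᴴ * (Matrix.of fun a k => φ j k a) = 1 := by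
      ext k r
      simp only [Matrix.mul_apply, Matrix.conjTranspose_apply, Matrix.of_apply,
        Matrix.one_apply]
      exact (hmub j j k r).2 rfl
    have hVV := mul_eq_one_comm.mp hV
    ext a b
    rw [← hVV]
    simp [Matrix.sum_apply, proj, Matrix.mul_apply, Matrix.conjTranspose_apply]
  -- probabilities sum to 1
  have h5 : ∀ j, ∑ k, (p j k : ℂ) = 1 := by
    intro j
    simp_rw [hp]
    rw [← Matrix.trace_sum]
    simp_rw [← Matrix.mul_sum]
    rw [h4 j, mul_one, htr]
  -- the frame reconstruction candidate
  set S : Matrix (Fin d) (Fin d) ℂ :=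
    (∑ j, ∑ k, (p j k : ℂ) • proj d (φ j k)) - 1 with hS
  have htrS : Matrix.trace S = 1 := by
    rw [hS, Matrix.trace_sub, Matrix.trace_one]
    simp_rw [Matrix.trace_sum, Matrix.trace_smul, h1, smul_eq_mul, mul_one, h5]
    simp
  have hPS : ∀ l r, Matrix.trace (proj d (φ l r) * S) = (p l r : ℂ) := by
    intro l r
    rw [hS, Matrix.mul_sub, Matrix.trace_sub, Matrix.mul_one, h1]
    rw [Matrix.mul_sum]
    simp_rw [Matrix.mul_sum, mul_smul_comm, Matrix.trace_sum, Matrix.trace_smul,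
      smul_eq_mul]
    have key : ∀ j : Fin (d + 1), (∑ k, (p j k : ℂ) * Matrix.trace (proj d (φ l r) * proj d (φ j k)))
        = if l = j then (p j r : ℂ) else 1 / (d : ℂ) := by
      intro j
      by_cases hlj : l = j
      · subst hlj
        simp_rw [h3, mul_ite, mul_one, mul_zero]
        simp [Finset.sum_ite_eq]
      · simp_rw [h2 l j r _ hlj, ← Finset.sum_mul, h5 j, one_mul, if_neg hlj]
    simp_rw [key]
    have expand : ∀ j : Fin (d + 1), (if l = j then (p j r : ℂ) else 1 / (d : ℂ))
        = 1 / (d : ℂ) + (if l = j then (p j r : ℂ) - 1 / (d : ℂ) else 0) := by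
      intro j; split <;> ring
    simp_rw [expand, Finset.sum_add_distrib, Finset.sum_const, Finset.sum_ite_eq,
      Finset.mem_univ, if_pos]
    simp only [Finset.card_univ, Fintype.card_fin, nsmul_eq_mul]
    push_cast
    field_simp
    ring
  have hrhoS : Matrix.trace (ρ * S) = (∑ j, ∑ k, (p j k : ℂ) ^ 2) - 1 := by
    rw [hS, Matrix.mul_sub, Matrix.trace_sub, Matrix.mul_one, htr]
    congr 1
    simp_rw [Matrix.mul_sum, mul_smul_comm, Matrix.trace_sum, Matrix.trace_smul,
      smul_eq_mul, ← hp]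
    ring_nf
  -- roots of unity
  set ζ : ℂ := Complex.exp (2 * Real.pi * Complex.I / d) with hζdef
  have hζ : IsPrimitiveRoot ζ d := Complex.isPrimitiveRoot_exp d (by omega)
  have hx1 : ∀ m : Fin (d - 1), ζ ^ ((m : ℕ) + 1) ≠ 1 := fun m =>
    hζ.pow_ne_one_of_pos_of_lt (by omega) (by have := m.2; omega)
  have hxd : ∀ n : ℕ, (ζ ^ n) ^ d = 1 := by
    intro n
    rw [← pow_mul, mul_comm, pow_mul, hζ.pow_eq_one, one_pow]
  have hyx : ∀ m : Fin (d - 1), ζ ^ ((d - 1) * ((m : ℕ) + 1)) * ζ ^ ((m : ℕ) + 1) = 1 := by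
    intro m
    rw [← pow_add]
    have heq : (d - 1) * ((m : ℕ) + 1) + ((m : ℕ) + 1) = ((m : ℕ) + 1) * d := by
      have h' : d - 1 + 1 = d := by omega
      calc (d - 1) * ((m : ℕ) + 1) + ((m : ℕ) + 1) = ((m : ℕ) + 1) * ((d - 1) + 1) := by ring
        _ = ((m : ℕ) + 1) * d := by rw [h']
    rw [heq, pow_mul]
    exact hxd _
  have hy1 : ∀ m : Fin (d - 1), ζ ^ ((d - 1) * ((m : ℕ) + 1)) ≠ 1 := by
    intro m h
    apply hx1 m
    have := hyx m
    rwa [h, one_mul] at this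
  have hgx : ∀ m : Fin (d - 1), ∑ k : Fin d, (ζ ^ ((m : ℕ) + 1)) ^ (k : ℕ) = 0 := fun m =>
    geo_sum d _ (hxd _) (hx1 m)
  have hgy : ∀ m : Fin (d - 1), ∑ k : Fin d, (ζ ^ ((d - 1) * ((m : ℕ) + 1))) ^ (k : ℕ) = 0 :=
    fun m => geo_sum d _ (hxd _) (hy1 m)
  -- Fourier combinations of the projectors
  set w : Fin (d + 1) → Fin (d - 1) → Matrix (Fin d) (Fin d) ℂ :=
    fun j m => ∑ k : Fin d, ((ζ ^ ((m : ℕ) + 1)) ^ (k : ℕ)) • proj d (φ j k) with hw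
  set w' : Fin (d + 1) → Fin (d - 1) → Matrix (Fin d) (Fin d) ℂ :=
    fun j m => ∑ k : Fin d, ((ζ ^ ((d - 1) * ((m : ℕ) + 1))) ^ (k : ℕ)) • proj d (φ j k) with hw'
  have hww : ∀ j l m m', Matrix.trace (w' j m * w l m')
      = if j = l ∧ m = m' then (d : ℂ) else 0 := by
    intro j l m m'
    simp only [hw, hw']
    rw [Matrix.sum_mul]
    simp_rw [Matrix.mul_sum, smul_mul_assoc, mul_smul_comm, Matrix.trace_sum,
      Matrix.trace_smul, smul_smul, smul_eq_mul]
    by_cases hjl : j = l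
    · subst hjl
      simp_rw [h3, mul_ite, mul_one, mul_zero, Finset.sum_ite_eq, Finset.mem_univ, if_pos]
      by_cases hmm : m = m'
      · subst hmm
        have hone : ∀ k : Fin d,
            (ζ ^ ((d - 1) * ((m : ℕ) + 1))) ^ (k : ℕ) * (ζ ^ ((m : ℕ) + 1)) ^ (k : ℕ) = 1 := by
          intro k
          rw [← mul_pow, hyx m, one_pow]
        simp_rw [hone]
        simp
      · have hz1 : ζ ^ ((d - 1) * ((m : ℕ) + 1)) * ζ ^ ((m' : ℕ) + 1) ≠ 1 := by
          intro h
          apply hmm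
          have hy0 : ζ ^ ((d - 1) * ((m : ℕ) + 1)) ≠ 0 :=
            left_ne_zero_of_mul_eq_one (hyx m)
          have hxx : ζ ^ ((m' : ℕ) + 1) = ζ ^ ((m : ℕ) + 1) :=
            mul_left_cancel₀ hy0 (h.trans (hyx m).symm)
          have h1' : (m' : ℕ) + 1 < d := by have := m'.2; omega
          have h2' : (m : ℕ) + 1 < d := by have := m.2; omega
          have := hζ.pow_inj h1' h2' hxx
          exact (Fin.ext (by omega)).symm
        have hzd : (ζ ^ ((d - 1) * ((m : ℕ) + 1)) * ζ ^ ((m' : ℕ) + 1)) ^ d = 1 := by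
          rw [mul_pow, hxd, hxd, one_mul]
        have := geo_sum d _ hzd hz1
        simp_rw [← mul_pow]
        rw [this]
        simp [hmm]
    · simp_rw [h2 j l _ _ hjl]
      have hinner : ∀ k : Fin d, ∑ r : Fin d,
          (ζ ^ ((d - 1) * ((m : ℕ) + 1))) ^ (k : ℕ) * (ζ ^ ((m' : ℕ) + 1)) ^ (r : ℕ) *
            (1 / (d : ℂ)) = 0 := by
        intro k
        rw [← Finset.sum_mul, ← Finset.mul_sum, hgx m', mul_zero, zero_mul]
      simp_rw [hinner]
      simp [hjl]
  have htw : ∀ j m, Matrix.trace (w j m) = 0 := by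
    intro j m
    simp only [hw]
    rw [Matrix.trace_sum]
    simp_rw [Matrix.trace_smul, h1, smul_eq_mul, mul_one]
    exact hgx m
  have htw' : ∀ j m, Matrix.trace (w' j m) = 0 := by
    intro j m
    simp only [hw']
    rw [Matrix.trace_sum]
    simp_rw [Matrix.trace_smul, h1, smul_eq_mul, mul_one]
    exact hgy m
  -- the spanning family
  set e : Option (Fin (d + 1) × Fin (d - 1)) → Matrix (Fin d) (Fin d) ℂ :=
    fun i => Option.elim i 1 (fun jm => w jm.1 jm.2) with he
  set f : Option (Fin (d + 1) × Fin (d - 1)) → Matrix (Fin d) (Fin d) ℂ :=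
    fun i => Option.elim i 1 (fun jm => w' jm.1 jm.2) with hf
  have hfe : ∀ i i', Matrix.trace (f i * e i') = if i = i' then (d : ℂ) else 0 := by
    rintro (_ | ⟨j, m⟩) (_ | ⟨l, m'⟩)
    · simp [he, hf, Matrix.trace_one]
    · simp only [he, hf, Option.elim, Matrix.one_mul]
      rw [htw]
      simp
    · simp only [he, hf, Option.elim, Matrix.mul_one]
      rw [htw']
      simp
    · simp only [he, hf, Option.elim]
      rw [hww]
      by_cases h : j = l ∧ m = m'
      · obtain ⟨rfl, rfl⟩ := h
        simp
      · rw [if_neg h, if_neg]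
        intro hc
        apply h
        obtain ⟨h1, h2⟩ := Prod.mk.injEq .. ▸ Option.some.inj hc
        exact ⟨h1, h2⟩
  have hind : LinearIndependent ℂ e := by
    rw [Fintype.linearIndependent_iff]
    intro c hc i
    have h0 : Matrix.trace (f i * (∑ i', c i' • e i')) = (d : ℂ) * c i := by
      rw [Matrix.mul_sum]
      simp_rw [mul_smul_comm, Matrix.trace_sum, Matrix.trace_smul, smul_eq_mul, hfe,
        mul_ite, mul_zero]
      rw [Finset.sum_ite_eq, if_pos (Finset.mem_univ i)]
      ring
    rw [hc, Matrix.mul_zero, Matrix.trace_zero] at h0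
    exact (mul_eq_zero.mp h0.symm).resolve_left hd0
  have hcard : Fintype.card (Option (Fin (d + 1) × Fin (d - 1)))
      = Module.finrank ℂ (Matrix (Fin d) (Fin d) ℂ) := by
    rw [Module.finrank_matrix]
    simp only [Fintype.card_option, Fintype.card_prod, Fintype.card_fin, Module.finrank_self,
      mul_one]
    obtain ⟨a, hda⟩ : ∃ a, d = a + 2 := ⟨d - 2, by omega⟩
    subst hda
    have h' : a + 2 - 1 = a + 1 := by omega
    rw [h']
    ring
  have hspan : Submodule.span ℂ (Set.range e) = ⊤ :=
    hind.span_eq_top_of_card_eq_finrank hcard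
  -- the linear functional A ↦ Tr(A (S - ρ)) vanishes identically
  set Mm : Matrix (Fin d) (Fin d) ℂ := S - ρ with hMm
  have hPM : ∀ l r, Matrix.trace (proj d (φ l r) * Mm) = 0 := by
    intro l r
    rw [hMm, Matrix.mul_sub, Matrix.trace_sub, hPS, Matrix.trace_mul_comm, ← hp, sub_self]
  let L : Matrix (Fin d) (Fin d) ℂ →ₗ[ℂ] ℂ :=
    { toFun := fun A => Matrix.trace (A * Mm),
      map_add' := fun A B => by
        show Matrix.trace ((A + B) * Mm) = Matrix.trace (A * Mm) + Matrix.trace (B * Mm)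
        rw [Matrix.add_mul, Matrix.trace_add],
      map_smul' := fun c A => by
        show Matrix.trace ((c • A) * Mm) = RingHom.id ℂ c • Matrix.trace (A * Mm)
        rw [smul_mul_assoc, Matrix.trace_smul]
        rfl }
  have hLe : ∀ i, L (e i) = 0 := by
    rintro (_ | ⟨j, m⟩)
    · show Matrix.trace (e none * Mm) = 0
      simp only [he, Option.elim, Matrix.one_mul]
      rw [hMm, Matrix.trace_sub, htrS, htr, sub_self]
    · show Matrix.trace (e (some (j, m)) * Mm) = 0
      simp only [he, Option.elim, hw]
      rw [Matrix.sum_mul]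
      simp_rw [smul_mul_assoc, Matrix.trace_sum, Matrix.trace_smul, hPM, smul_zero]
      simp
  have hL0 : L = 0 := by
    apply LinearMap.ext_on hspan
    rintro A ⟨i, rfl⟩
    rw [hLe i]
    rfl
  have hLρ : Matrix.trace (ρ * Mm) = 0 := by
    have := congrArg (fun g => g ρ) hL0
    exact this
  have hfin : Matrix.trace (ρ * ρ) = (∑ j, ∑ k, (p j k : ℂ) ^ 2) - 1 := by
    rw [hMm, Matrix.mul_sub, Matrix.trace_sub, sub_eq_zero] at hLρ
    rw [← hLρ, hrhoS]
  rw [hfin]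
  push_cast
  ring
end

section
/- Any Hermitian operator ρ on C^d (d prime) can be written as ρ = ∑_{j=0}^{d} ∑_{k=0}^{d−1} (p^j_k − 1/(d+1)) Π^j_k, where p^j_k = Tr(ρ Π^j_k) and Tr(ρ) = 1, given a complete set of d+1 mutually unbiased bases with projectors Π^j_k. -/
open Matrix BigOperators

namespace MubAux

lemma ip_conj (d : ℕ) (u v : Fin d → ℂ) : ip d v u = starRingEnd ℂ (ip d u v) := by
  simp [ip, map_sum, mul_comm]

lemma trace_proj_mul_proj (d : ℕ) (u v : Fin d → ℂ) :
    (proj d u * proj d v).trace = ip d u v * ip d v u := by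
  simp only [Matrix.trace, Matrix.diag, Matrix.mul_apply, proj, Matrix.of_apply, ip]
  rw [Finset.sum_mul_sum]
  rw [Finset.sum_comm]
  exact Finset.sum_congr rfl fun a _ => Finset.sum_congr rfl fun b _ => by ring

lemma sum_proj_eq_one (d : ℕ) (u : Fin d → (Fin d → ℂ))
    (h : ∀ k r, ip d (u k) (u r) = if k = r then (1:ℂ) else 0) :
    ∑ k, proj d (u k) = 1 := by
  set U : Matrix (Fin d) (Fin d) ℂ := Matrix.of fun k a => star (u k a) with hUdef
  have hU : U * Uᴴ = 1 := by
    ext k r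
    have hkr := h k r
    simp only [Matrix.mul_apply, Matrix.conjTranspose_apply, hUdef, Matrix.of_apply, star_star,
      Matrix.one_apply]
    rw [← hkr]; simp [ip]
  have hU2 : Uᴴ * U = 1 := mul_eq_one_comm.mp hU
  ext a b
  have h2 : (Uᴴ * U) a b = (1 : Matrix (Fin d) (Fin d) ℂ) a b := by rw [hU2]
  simp only [Matrix.mul_apply, Matrix.conjTranspose_apply, hUdef, Matrix.of_apply, star_star] at h2
  simpa [Matrix.sum_apply, proj] using h2

noncomputable def Lm (d : ℕ) (Φ : Fin (d+1) × Fin d → Matrix (Fin d) (Fin d) ℂ) :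
    Matrix (Fin d) (Fin d) ℂ →ₗ[ℂ] ((Fin (d+1) × Fin d) → ℂ) where
  toFun A := fun i => ((Φ i) * A).trace
  map_add' A B := by funext i; simp [Matrix.mul_add]
  map_smul' t A := by funext i; simp [Matrix.mul_smul]

noncomputable def Rm (d : ℕ) (Φ : Fin (d+1) × Fin d → Matrix (Fin d) (Fin d) ℂ) :
    ((Fin (d+1) × Fin d) → ℂ) →ₗ[ℂ] Matrix (Fin d) (Fin d) ℂ where
  toFun c := ∑ i, c i • Φ i
  map_add' c c' := by simp [add_smul, Finset.sum_add_distrib]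
  map_smul' t c := by simp [smul_smul, Finset.smul_sum]

lemma gram (d : ℕ) (Φ : Fin (d+1) × Fin d → Matrix (Fin d) (Fin d) ℂ)
    (hG : ∀ i i', (Φ i * Φ i').trace =
      if i.1 = i'.1 then (if i.2 = i'.2 then (1:ℂ) else 0) else 1/(d:ℂ)) (c) :
    Lm d Φ (Rm d Φ c) = fun i => c i + (1/(d:ℂ)) * ((∑ i', c i') - ∑ k, c (i.1, k)) := by
  funext i
  show (Φ i * ∑ i', c i' • Φ i').trace = _
  rw [Matrix.mul_sum, Matrix.trace_sum]
  simp only [Matrix.mul_smul, Matrix.trace_smul, hG, smul_eq_mul]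
  rw [Fintype.sum_prod_type]
  rw [← Finset.add_sum_erase _ _ (Finset.mem_univ i.1)]
  have h1 : ∑ k, c (i.1, k) * (if i.1 = i.1 then (if i.2 = k then (1:ℂ) else 0) else 1/(d:ℂ))
      = c i := by
    simp only [if_pos rfl, mul_ite, mul_one, mul_zero]
    simp [Finset.sum_ite_eq]
  rw [h1]
  have h2 : ∀ j ∈ Finset.univ.erase i.1,
      (∑ k, c (j, k) * (if i.1 = j then (if i.2 = k then (1:ℂ) else 0) else 1/(d:ℂ)))
      = (1/(d:ℂ)) * ∑ k, c (j, k) := by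
    intro j hj
    rw [Finset.mul_sum]
    refine Finset.sum_congr rfl fun k _ => ?_
    rw [if_neg (Ne.symm (Finset.mem_erase.mp hj).1)]
    ring
  rw [Finset.sum_congr rfl h2, ← Finset.mul_sum,
    Finset.sum_erase_eq_sub (Finset.mem_univ i.1)]
  rw [Fintype.sum_prod_type]

lemma L_injective (d : ℕ) (hd : 0 < d)
    (L : Matrix (Fin d) (Fin d) ℂ →ₗ[ℂ] ((Fin (d+1) × Fin d) → ℂ))
    (R : ((Fin (d+1) × Fin d) → ℂ) →ₗ[ℂ] Matrix (Fin d) (Fin d) ℂ)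
    (hgram : ∀ c, L (R c) =
      fun i => c i + (1/(d:ℂ)) * ((∑ i', c i') - ∑ k, c (i.1, k))) :
    Function.Injective L := by
  set K := LinearMap.ker (L.comp R) with hK
  let z : Fin d := ⟨0, hd⟩
  let f : K →ₗ[ℂ] (Fin d → ℂ) :=
    { toFun := fun x j => (x : (Fin (d+1) × Fin d) → ℂ) (j.castSucc, z)
      map_add' := by intro x y; funext j; simp
      map_smul' := by intro t x; funext j; simp }
  have hker0 : ∀ x : K, f x = 0 → x = 0 := by
    intro x hfx
    have hmem : L (R (x : (Fin (d+1) × Fin d) → ℂ)) = 0 := x.2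
    rw [hgram] at hmem
    have heq : ∀ i : Fin (d+1) × Fin d,
        (x : (Fin (d+1) × Fin d) → ℂ) i
          = (1/(d:ℂ)) * ((∑ k, (x : (Fin (d+1) × Fin d) → ℂ) (i.1, k))
              - ∑ i', (x : (Fin (d+1) × Fin d) → ℂ) i') := by
      intro i
      have := congrFun hmem i
      simp only [Pi.zero_apply] at this
      linear_combination this
    have hrow : ∀ (j : Fin (d+1)) (k k' : Fin d),
        (x : (Fin (d+1) × Fin d) → ℂ) (j, k) = (x : (Fin (d+1) × Fin d) → ℂ) (j, k') := by
      intro j k k'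
      rw [heq (j, k), heq (j, k')]
    have hz : ∀ (j : Fin d) (k : Fin d),
        (x : (Fin (d+1) × Fin d) → ℂ) (j.castSucc, k) = 0 := by
      intro j k
      rw [hrow _ k z]
      exact congrFun hfx j
    apply Subtype.ext
    funext i
    obtain ⟨j, k⟩ := i
    rcases Fin.eq_castSucc_or_eq_last j with ⟨j', rfl⟩ | rfl
    · exact hz j' k
    · have hS : ∑ i', (x : (Fin (d+1) × Fin d) → ℂ) i'
          = ∑ k', (x : (Fin (d+1) × Fin d) → ℂ) (Fin.last d, k') := by
        rw [Fintype.sum_prod_type, Fin.sum_univ_castSucc]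
        simp [hz]
      have := heq (Fin.last d, k)
      simp only [hS] at this
      simpa using this
  have hfinj : Function.Injective f :=
    LinearMap.ker_eq_bot.mp (LinearMap.ker_eq_bot'.mpr hker0)
  have hKd : Module.finrank ℂ K ≤ d := by
    have h := LinearMap.finrank_le_finrank_of_injective hfinj
    simpa using h
  have hrn : Module.finrank ℂ (LinearMap.range (L.comp R)) + Module.finrank ℂ K = (d+1)*d := by
    rw [hK, LinearMap.finrank_range_add_finrank_ker (L.comp R)]
    simp [Module.finrank_fintype_fun_eq_card]
  have hsub : LinearMap.range (L.comp R) ≤ LinearMap.range L :=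
    LinearMap.range_comp_le_range R L
  have harith : (d+1)*d = d*d + d := by ring
  have h5 : d*d ≤ Module.finrank ℂ (LinearMap.range L) := by
    refine le_trans ?_ (Submodule.finrank_mono hsub)
    omega
  have h6 : Module.finrank ℂ (LinearMap.range L) + Module.finrank ℂ (LinearMap.ker L) = d*d := by
    rw [LinearMap.finrank_range_add_finrank_ker L]
    simp [Module.finrank_matrix]
  have h7 : Module.finrank ℂ (LinearMap.ker L) = 0 := by omega
  rw [← LinearMap.ker_eq_bot]
  exact Submodule.finrank_eq_zero.mp h7

end MubAux

/-- any Hermitian `ρ` of unit trace on `ℂ^d`, `d` prime,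
decomposes as `ρ = ∑_{j,k} (p^j_k - 1/(d+1)) Π^j_k` over a complete set of
`d+1` mutually unbiased bases, with `p^j_k = Tr(ρ Π^j_k)`. -/
theorem mub_decomposition (d : ℕ) (hp : Nat.Prime d)
    (φ : Fin (d + 1) → Fin d → (Fin d → ℂ))
    (hmub : ∀ j l k r, (j ≠ l → ‖ip d (φ j k) (φ l r)‖ ^ 2 = 1 / d) ∧
      (j = l → ip d (φ j k) (φ l r) = if k = r then 1 else 0))
    (ρ : Matrix (Fin d) (Fin d) ℂ) (hherm : ρ.IsHermitian)
    (htr : Matrix.trace ρ = 1) :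
    ρ = ∑ j, ∑ k,
      (Matrix.trace (ρ * proj d (φ j k)) - 1 / (d + 1)) • proj d (φ j k) := by
  have hd : 0 < d := hp.pos
  have hdc : (d:ℂ) ≠ 0 := Nat.cast_ne_zero.mpr hp.ne_zero
  have hd1 : ((d:ℂ)+1) ≠ 0 := by
    have h : ((d:ℂ)+1) = ((d+1 : ℕ) : ℂ) := by push_cast; ring
    rw [h]
    exact_mod_cast Nat.succ_ne_zero d
  set Φ : Fin (d+1) × Fin d → Matrix (Fin d) (Fin d) ℂ := fun i => proj d (φ i.1 i.2) with hΦ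
  have hG : ∀ i i', (Φ i * Φ i').trace =
      if i.1 = i'.1 then (if i.2 = i'.2 then (1:ℂ) else 0) else 1/(d:ℂ) := by
    intro i i'
    rw [hΦ]
    rw [MubAux.trace_proj_mul_proj]
    by_cases h : i.1 = i'.1
    · rw [if_pos h, (hmub i.1 i'.1 i.2 i'.2).2 h, (hmub i'.1 i.1 i'.2 i.2).2 h.symm]
      by_cases h2 : i.2 = i'.2
      · simp [h2]
      · simp [h2, Ne.symm h2]
    · rw [if_neg h]
      have habs := (hmub i.1 i'.1 i.2 i'.2).1 h
      have hcj : ip d (φ i'.1 i'.2) (φ i.1 i.2)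
          = starRingEnd ℂ (ip d (φ i.1 i.2) (φ i'.1 i'.2)) := MubAux.ip_conj d _ _
      rw [hcj, Complex.mul_conj]
      have hn : Complex.normSq (ip d (φ i.1 i.2) (φ i'.1 i'.2)) = 1/(d:ℝ) := by
        rw [← Complex.sq_norm]; exact habs
      rw [hn]
      push_cast
      ring
  have hres : ∀ j, ∑ k, proj d (φ j k) = 1 :=
    fun j => MubAux.sum_proj_eq_one d (φ j) (fun k r => (hmub j j k r).2 rfl)
  have hpsum : ∀ j, ∑ k, (ρ * proj d (φ j k)).trace = 1 := by
    intro j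
    rw [← Matrix.trace_sum, ← Matrix.mul_sum, hres j, mul_one, htr]
  set c : (Fin (d+1) × Fin d) → ℂ := fun i => (ρ * Φ i).trace - 1/((d:ℂ)+1) with hc
  have hLRc := MubAux.gram d Φ hG c
  have hSrow : ∀ j, ∑ k, c (j, k) = 1 - (d:ℂ) * (1/((d:ℂ)+1)) := by
    intro j
    rw [hc]
    simp only [Finset.sum_sub_distrib, Finset.sum_const, Finset.card_univ, Fintype.card_fin,
      nsmul_eq_mul]
    rw [hpsum j]
  have hS : ∑ i', c i' = ((d:ℂ)+1) * (1 - (d:ℂ) * (1/((d:ℂ)+1))) := by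
    rw [Fintype.sum_prod_type]
    simp only [hSrow, Finset.sum_const, Finset.card_univ, Fintype.card_fin, nsmul_eq_mul]
    push_cast
    ring
  have hLeq : MubAux.Lm d Φ ρ = MubAux.Lm d Φ (MubAux.Rm d Φ c) := by
    rw [hLRc]
    funext i
    show (Φ i * ρ).trace = c i + (1/(d:ℂ)) * ((∑ i', c i') - ∑ k, c (i.1, k))
    rw [hS, hSrow, Matrix.trace_mul_comm]
    rw [hc]
    field_simp
    ring
  have hLinj := MubAux.L_injective d hd (MubAux.Lm d Φ) (MubAux.Rm d Φ) (MubAux.gram d Φ hG)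
  refine Eq.trans (hLinj hLeq) ?_
  show (∑ i, c i • Φ i) = _
  rw [Fintype.sum_prod_type]
end

section
/- Define p^j_k = 1/d + (2/d)·(d+1)^{−1/2} ∑_{r=1}^{(d−1)/2} cos(α^j_r + 2πkr/d) for real phases α^j_r. Then for each fixed j, ∑_{k=0}^{d−1} p^j_k = 1 and ∑_{k=0}^{d−1} (p^j_k)² = 2/(d+1). -/
open BigOperators Finset


lemma sum_exp_zero (d : ℕ) (hd : 0 < d) (m : ℤ) (hm : ¬ (d:ℤ) ∣ m) :
    ∑ k ∈ Finset.range d, Complex.exp (2*Real.pi*Complex.I*m*k/d) = 0 := by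
  have hd' : (d:ℂ) ≠ 0 := by exact_mod_cast hd.ne'
  have hz : ∀ k : ℕ, Complex.exp (2*Real.pi*Complex.I*m*k/d)
      = (Complex.exp (2*Real.pi*Complex.I*m/d))^k := by
    intro k
    rw [← Complex.exp_nat_mul]
    congr 1
    ring
  simp_rw [hz]
  set z := Complex.exp (2*Real.pi*Complex.I*m/d) with hzdef
  have h2pi : (2*(Real.pi:ℂ)*Complex.I) ≠ 0 := by
    simp [Complex.I_ne_zero, Real.pi_ne_zero]
  have hz1 : z ≠ 1 := by
    intro h
    rw [hzdef, Complex.exp_eq_one_iff] at h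
    obtain ⟨n, hn⟩ := h
    apply hm ⟨n, ?_⟩
    have : (m : ℂ) = (d:ℂ) * n := by
      field_simp at hn
      exact hn
    exact_mod_cast this
  have hzd : z ^ d = 1 := by
    rw [hzdef, ← Complex.exp_nat_mul]
    have h : (d:ℂ) * (2*Real.pi*Complex.I*m/d) = m * (2*Real.pi*Complex.I) := by
      field_simp
    rw [h]
    exact Complex.exp_int_mul_two_pi_mul_I m
  rw [geom_sum_eq hz1, hzd]
  simp

lemma sum_cos_zero (d : ℕ) (hd : 0 < d) (m : ℤ) (hm : ¬ (d:ℤ) ∣ m) (β : ℝ) :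
    ∑ k ∈ Finset.range d, Real.cos (β + 2*Real.pi*k*m/d) = 0 := by
  have h : ∀ k:ℕ, Real.cos (β + 2*Real.pi*k*m/d)
      = (Complex.exp (β*Complex.I) * Complex.exp (2*Real.pi*Complex.I*m*k/d)).re := by
    intro k
    rw [← Complex.exp_add]
    have h2 : (β:ℂ)*Complex.I + 2*Real.pi*Complex.I*m*k/d
        = ((β + 2*Real.pi*k*m/d : ℝ) : ℂ) * Complex.I := by push_cast; ring
    rw [h2, Complex.exp_ofReal_mul_I_re]
  simp_rw [h]
  rw [← Complex.re_sum, ← Finset.mul_sum, sum_exp_zero d hd m hm, mul_zero]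
  simp

/-- `p^j_k = 1/d + (2/d)(d+1)^{-1/2} ∑_{r=1}^{(d-1)/2} cos(α^j_r + 2πkr/d)` -/
noncomputable def pfun (d : ℕ) (α : ℕ → ℕ → ℝ) (j k : ℕ) : ℝ :=
  1 / d + (2 / d) * (1 / Real.sqrt (d + 1)) *
    ∑ r ∈ Finset.Icc 1 ((d - 1) / 2), Real.cos (α j r + 2 * Real.pi * k * r / d)

/-- for each fixed `j`, `∑_k p^j_k = 1` and
`∑_k (p^j_k)² = 2/(d+1)`. -/
theorem pfun_sum_and_sumsq (d : ℕ) (hp : Nat.Prime d) (hodd : Odd d)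
    (α : ℕ → ℕ → ℝ) (j : ℕ) (hj : j ≤ d) :
    (∑ k ∈ Finset.range d, pfun d α j k = 1) ∧
    (∑ k ∈ Finset.range d, (pfun d α j k) ^ 2 = 2 / (d + 1)) := by
  obtain ⟨n, hn⟩ := hodd
  have hd0 : 0 < d := hp.pos
  have hd2 : 2 ≤ d := hp.two_le
  have hIdx : (d-1)/2 = n := by omega
  have hdR : (d:ℝ) ≠ 0 := Nat.cast_ne_zero.mpr hd0.ne'
  set c : ℝ := 2 / d * (1 / Real.sqrt (d+1)) with hc
  set S : ℕ → ℝ := fun k => ∑ r ∈ Finset.Icc 1 n, Real.cos (α j r + 2*Real.pi*k*r/d)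
    with hSdef
  have hpf : ∀ k, pfun d α j k = 1/d + c * S k := by
    intro k; rw [pfun, hIdx]
  have hrow : ∀ r : ℕ, 1 ≤ r → r ≤ 2*n → ∀ β:ℝ,
      ∑ k ∈ Finset.range d, Real.cos (β + 2*Real.pi*k*r/d) = 0 := by
    intro r h1 h2 β
    have hm0 : ¬ d ∣ r := Nat.not_dvd_of_pos_of_lt h1 (by omega)
    have hm : ¬ (d:ℤ) ∣ (r:ℤ) := by exact_mod_cast hm0
    have := sum_cos_zero d hd0 r hm β
    simpa using this
  have hS : ∑ k ∈ Finset.range d, S k = 0 := by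
    rw [hSdef, Finset.sum_comm]
    apply Finset.sum_eq_zero
    intro r hr
    simp only [Finset.mem_Icc] at hr
    exact hrow r hr.1 (by omega) (α j r)
  have part1 : ∑ k ∈ Finset.range d, pfun d α j k = 1 := by
    simp_rw [hpf]
    rw [Finset.sum_add_distrib, ← Finset.mul_sum, hS, mul_zero, add_zero,
      Finset.sum_const, Finset.card_range, nsmul_eq_mul]
    field_simp
  refine ⟨part1, ?_⟩
  have keycc : ∀ x y : ℝ, Real.cos x * Real.cos y = (Real.cos (x+y) + Real.cos (x-y))/2 := by
    intro x y; rw [Real.cos_add, Real.cos_sub]; ring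
  have hcross : ∀ r ∈ Finset.Icc 1 n, ∀ s ∈ Finset.Icc 1 n,
      ∑ k ∈ Finset.range d,
        Real.cos (α j r + 2*Real.pi*k*r/d) * Real.cos (α j s + 2*Real.pi*k*s/d)
      = if r = s then (d:ℝ)/2 else 0 := by
    intro r hr s hs
    simp only [Finset.mem_Icc] at hr hs
    have hprod : ∀ k:ℕ,
        Real.cos (α j r + 2*Real.pi*k*r/d) * Real.cos (α j s + 2*Real.pi*k*s/d)
        = (Real.cos ((α j r + α j s) + 2*Real.pi*k*((r+s:ℕ))/d)
           + Real.cos ((α j r - α j s) + 2*Real.pi*k*(((r:ℤ)-(s:ℤ) : ℤ) : ℝ)/d)) / 2 := by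
      intro k
      rw [keycc]
      congr 2
      · push_cast; ring
      · push_cast; ring
    simp_rw [hprod]
    rw [← Finset.sum_div, Finset.sum_add_distrib]
    have hA : ∑ k ∈ Finset.range d,
        Real.cos ((α j r + α j s) + 2*Real.pi*k*((r+s:ℕ))/d) = 0 :=
      hrow (r+s) (by omega) (by omega) _
    rw [hA]
    by_cases hrs : r = s
    · subst hrs
      rw [if_pos rfl]
      have hone : ∀ x ∈ Finset.range d,
          Real.cos (α j r - α j r + 2*Real.pi*x*(((r:ℤ)-(r:ℤ) : ℤ) : ℝ)/d) = 1 := by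
        intro x _; simp
      rw [Finset.sum_congr rfl hone, Finset.sum_const, Finset.card_range,
        nsmul_eq_mul, mul_one]
      ring
    · have h0 : (r:ℤ) - (s:ℤ) ≠ 0 := by omega
      have hm : ¬ (d:ℤ) ∣ ((r:ℤ)-(s:ℤ)) := by
        intro hdvd
        have h1 : (d:ℤ) ≤ |(r:ℤ)-(s:ℤ)| :=
          Int.le_of_dvd (abs_pos.mpr h0) ((dvd_abs _ _).mpr hdvd)
        have h2 : |(r:ℤ)-(s:ℤ)| < d := by
          rw [abs_lt]; omega
        omega
      rw [sum_cos_zero d hd0 ((r:ℤ)-(s:ℤ)) hm (α j r - α j s), if_neg hrs]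
      norm_num
  have hSS : ∑ k ∈ Finset.range d, (S k)^2 = n * ((d:ℝ)/2) := by
    have h1 : ∀ k, (S k)^2 = ∑ r ∈ Finset.Icc 1 n, ∑ s ∈ Finset.Icc 1 n,
        Real.cos (α j r + 2*Real.pi*k*r/d) * Real.cos (α j s + 2*Real.pi*k*s/d) := by
      intro k; rw [hSdef, sq, Finset.sum_mul_sum]
    simp_rw [h1]
    rw [Finset.sum_comm]
    have h2 : ∀ r ∈ Finset.Icc 1 n,
        (∑ k ∈ Finset.range d, ∑ s ∈ Finset.Icc 1 n,
          Real.cos (α j r + 2*Real.pi*k*r/d) * Real.cos (α j s + 2*Real.pi*k*s/d))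
        = (d:ℝ)/2 := by
      intro r hr
      rw [Finset.sum_comm]
      have h3 : ∀ s ∈ Finset.Icc 1 n,
          ∑ k ∈ Finset.range d,
            Real.cos (α j r + 2*Real.pi*k*r/d) * Real.cos (α j s + 2*Real.pi*k*s/d)
          = if s = r then (d:ℝ)/2 else 0 := by
        intro s hs
        rw [hcross r hr s hs]
        simp [eq_comm]
      rw [Finset.sum_congr rfl h3, Finset.sum_ite_eq' (Finset.Icc 1 n) r, if_pos hr]
    rw [Finset.sum_congr rfl h2, Finset.sum_const, Nat.card_Icc, nsmul_eq_mul]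
    simp
  -- final computation
  simp_rw [hpf]
  have expand : ∀ k:ℕ, (1/(d:ℝ) + c * S k)^2
      = 1/(d:ℝ)^2 + (2/d*c)*(S k) + c^2*(S k)^2 := by intro k; ring
  rw [Finset.sum_congr rfl (fun k _ => expand k), Finset.sum_add_distrib,
    Finset.sum_add_distrib, ← Finset.mul_sum, ← Finset.mul_sum, hS, hSS, mul_zero,
    add_zero, Finset.sum_const, Finset.card_range, nsmul_eq_mul]
  have hsq2 : Real.sqrt ((d:ℝ)+1) ^ 2 = (d:ℝ)+1 := Real.sq_sqrt (by positivity)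
  have hdr : (d:ℝ) = 2*(n:ℝ)+1 := by rw [hn]; push_cast; ring
  have hc2 : c^2 = 4/((d:ℝ)^2*((d:ℝ)+1)) := by
    have hd1 : (d:ℝ)+1 ≠ 0 := by positivity
    rw [hc, mul_pow, div_pow, div_pow, one_pow, hsq2]
    field_simp
    ring
  rw [hc2, hdr]
  have h1 : (2*(n:ℝ)+1) ≠ 0 := by positivity
  have h2 : (2*(n:ℝ)+1+1) ≠ 0 := by positivity
  field_simp
  ring
end
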